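/- The function TL(T) = L(T) + C(T), where L(T) = 279.69668 + 36000.76892·T + 0.0003025·T², C(T) = (1.919460 − 0.004789·T − 0.000014·T²)·sind(M(T)) + (0.020094 − 0.0001·T)·sind(2·M(T)) + 0.000293·sind(3·M(T)), sind(x) = sin(π·x/180), and M(T) = 358.47583 + 35999.04975·T − 0.000150·T² − 0.0000033·T³, is strictly monotonically increasing on the interval [−10, 10]. -/

import Mathlib

/-- Sine of an angle expressed in degrees. -/
noncomputable def sind (x : ℝ) : ℝ := Real.sin (Real.pi * x / 180)

/-- Mean anomaly of the Sun (degrees), Newcomb's solar theory. -/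
noncomputable def M (T : ℝ) : ℝ :=
  358.47583 + 35999.04975 * T - 0.000150 * T ^ 2 - 0.0000033 * T ^ 3

/-- Equation of the Sun's center (degrees). -/
noncomputable def C (T : ℝ) : ℝ :=
  (1.919460 - 0.004789 * T - 0.000014 * T ^ 2) * sind (M T)
    + (0.020094 - 0.0001 * T) * sind (2 * M T)
    + 0.000293 * sind (3 * M T)

/-- Mean longitude of the Sun (degrees). -/
noncomputable def L (T : ℝ) : ℝ :=
  279.69668 + 36000.76892 * T + 0.0003025 * T ^ 2

/-- True longitude of the Sun (degrees). -/
noncomputable def TL (T : ℝ) : ℝ := L T + C T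

/-!
On `[-10, 10]` the mean longitude grows at rate `L' ≥ 36000`. The equation of the center is a sum
of sinusoids in `M` with amplitudes at most 2°, and the chain rule multiplies each of them by
`(π / 180) · k · M' ≈ 630 k`, so `|C'| ≤ 0.0101 + 412.18 π < 1700`. Hence `TL' > 0`.
-/

open Real Set

lemma hasDerivAt_cubic {f : ℝ → ℝ} (a b c d : ℝ)
    (hf : ∀ t, f t = a + b * t + c * t ^ 2 + d * t ^ 3) (x : ℝ) :
    HasDerivAt f (b + 2 * c * x + 3 * d * x ^ 2) x := by
  have h := ((((hasDerivAt_id x).const_mul b).const_add a).add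
    ((hasDerivAt_pow 2 x).const_mul c)).add ((hasDerivAt_pow 3 x).const_mul d)
  rw [show f = _ from funext hf]
  exact h.congr_deriv (by simp; ring)

lemma hasDerivAt_sind (x : ℝ) : HasDerivAt sind (cos (π * x / 180) * (π / 180)) x := by
  show HasDerivAt (fun x => sin (π * x / 180)) _ x
  simpa using ((hasDerivAt_id x).const_mul π |>.div_const 180).sin

lemma exists_hasDerivAt_mul_sind_abs_le {a φ : ℝ → ℝ} {a' φ' x A A' Φ : ℝ}
    (ha : HasDerivAt a a' x) (hφ : HasDerivAt φ φ' x)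
    (hA : |a x| ≤ A) (hA' : |a'| ≤ A') (hΦ : |φ'| ≤ Φ) :
    ∃ d, HasDerivAt (fun t => a t * sind (φ t)) d x ∧ |d| ≤ A' + A * Φ * (π / 180) := by
  refine ⟨_, ha.mul ((hasDerivAt_sind _).comp x hφ), ?_⟩
  have hA₀ : 0 ≤ A := (abs_nonneg _).trans hA
  calc _ ≤ |a'| * |sind (φ x)| + |a x| * (|cos (π * φ x / 180)| * (π / 180) * |φ'|) := by
        rw [← abs_of_pos (by positivity : 0 < π / 180), ← abs_mul, ← abs_mul, ← abs_mul,
          ← abs_mul, abs_of_pos (by positivity : 0 < π / 180)]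
        exact abs_add_le _ _
    _ ≤ A' * 1 + A * (1 * (π / 180) * Φ) := by
        gcongr
        · exact (abs_nonneg _).trans hA'
        · exact abs_sin_le_one _
        · exact abs_cos_le_one _
    _ = A' + A * Φ * (π / 180) := by ring

lemma exists_hasDerivAt_M_abs_le {T : ℝ} (hT : T ∈ Icc (-10 : ℝ) 10) :
    ∃ m, HasDerivAt M m T ∧ |m| ≤ 36000 :=
  ⟨_, hasDerivAt_cubic 358.47583 35999.04975 (-0.000150) (-0.0000033)
      (fun t => by unfold M; ring) T,
    abs_le.2 ⟨by nlinarith [hT.1, hT.2], by nlinarith [hT.1, hT.2]⟩⟩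

lemma exists_hasDerivAt_C_abs_le {T : ℝ} (hT : T ∈ Icc (-10 : ℝ) 10) :
    ∃ c, HasDerivAt C c T ∧ |c| ≤ 1700 := by
  obtain ⟨m, hM, hm⟩ := exists_hasDerivAt_M_abs_le hT
  obtain ⟨hT₁, hT₂⟩ := hT
  obtain ⟨c₁, h₁, hc₁⟩ : ∃ c₁,
      HasDerivAt (fun t => (1.919460 - 0.004789 * t - 0.000014 * t ^ 2) * sind (M t)) c₁ T ∧
        |c₁| ≤ 0.01 + 2 * 36000 * (π / 180) :=
    exists_hasDerivAt_mul_sind_abs_le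
      (hasDerivAt_cubic 1.919460 (-0.004789) (-0.000014) 0 (fun _ => by ring) T) hM
      (abs_le.2 ⟨by nlinarith, by nlinarith⟩) (abs_le.2 ⟨by linarith, by linarith⟩) hm
  obtain ⟨c₂, h₂, hc₂⟩ : ∃ c₂,
      HasDerivAt (fun t => (0.020094 - 0.0001 * t) * sind (2 * M t)) c₂ T ∧
        |c₂| ≤ 0.0001 + 0.03 * (2 * 36000) * (π / 180) :=
    exists_hasDerivAt_mul_sind_abs_le
      (hasDerivAt_cubic 0.020094 (-0.0001) 0 0 (fun _ => by ring) T) (hM.const_mul 2)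
      (abs_le.2 ⟨by linarith, by linarith⟩) (abs_le.2 ⟨by linarith, by linarith⟩)
      (by rw [abs_mul, abs_two]; linarith)
  obtain ⟨c₃, h₃, hc₃⟩ : ∃ c₃,
      HasDerivAt (fun t => 0.000293 * sind (3 * M t)) c₃ T ∧
        |c₃| ≤ 0 + 0.000293 * (3 * 36000) * (π / 180) :=
    exists_hasDerivAt_mul_sind_abs_le (hasDerivAt_const T _) (hM.const_mul 3)
      (by norm_num) (by norm_num) (by rw [abs_mul, abs_of_pos three_pos]; linarith)
  refine ⟨c₁ + c₂ + c₃, (h₁.add h₂).add h₃, ?_⟩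
  linarith [abs_add_three c₁ c₂ c₃, pi_le_four]

lemma exists_hasDerivAt_TL_pos {T : ℝ} (hT : T ∈ Icc (-10 : ℝ) 10) :
    ∃ d, HasDerivAt TL d T ∧ 0 < d := by
  obtain ⟨c, hC, hc⟩ := exists_hasDerivAt_C_abs_le hT
  have hL :=
    hasDerivAt_cubic (f := L) 279.69668 36000.76892 0.0003025 0 (fun t => by unfold L; ring) T
  exact ⟨_, hL.add hC, by linarith [(abs_le.1 hc).1, hT.1]⟩

theorem TL_strictMonoOn : StrictMonoOn TL (Set.Icc (-10 : ℝ) 10) := by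
  refine strictMonoOn_of_deriv_pos (convex_Icc _ _) (fun T hT => ?_) (fun T hT => ?_)
  · obtain ⟨d, hd, -⟩ := exists_hasDerivAt_TL_pos hT
    exact hd.continuousAt.continuousWithinAt
  · obtain ⟨d, hd, hpos⟩ := exists_hasDerivAt_TL_pos (interior_subset hT)
    rwa [hd.deriv]
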